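/- arXiv:1210.3833 — 4 statements merged into one kernel-verified Lean document; each statement's English description precedes it below -/
import Mathlib

section
/- (Anchored 4-cycle rigidity.) Let u, v, x, y, x′, y′ ∈ ℝ be such that u, v, x, y are pairwise distinct and u, v, x′, y′ are pairwise distinct. Suppose |x − u| = |x′ − u|, |y − v| = |y′ − v|, |x − y| = |x′ − y′|, and |x − u| ≠ |y − v|. Then x = x′ and y = y′. (This is the correctness of the second-round 4-cycle construction p_i q_{il} q_{jl} p_j: with the two base points p_i, p_j already fixed on the line, the 4-cycle is line rigid provided |p_i q_{il}| ≠ |p_j q_{jl}|.) -/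
/-- Anchored 4-cycle rigidity: with base points `u`, `v` already fixed on the
line, the 4-cycle `u x y v` is line rigid provided `|x - u| ≠ |y - v|`. -/
theorem anchored_four_cycle_rigid
    (u v x y x' y' : ℝ)
    (hdist : u ≠ v ∧ u ≠ x ∧ u ≠ y ∧ v ≠ x ∧ v ≠ y ∧ x ≠ y)
    (hdist' : u ≠ v ∧ u ≠ x' ∧ u ≠ y' ∧ v ≠ x' ∧ v ≠ y' ∧ x' ≠ y')
    (h1 : |x - u| = |x' - u|)
    (h2 : |y - v| = |y' - v|)
    (h3 : |x - y| = |x' - y'|)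
    (hne : |x - u| ≠ |y - v|) :
    x = x' ∧ y = y' := by
  obtain ⟨huv, hux, huy, hvx, hvy, hxy⟩ := hdist
  rcases abs_eq_abs.mp h1 with e1 | e1 <;> rcases abs_eq_abs.mp h2 with e2 | e2 <;>
    rcases abs_eq_abs.mp h3 with e3 | e3
  · exact ⟨by linarith, by linarith⟩
  · exact absurd (by linarith : x = y) hxy
  · exact absurd (by linarith : v = y) hvy
  · exact absurd (by linarith : v = x) hvx
  · exact absurd (by linarith : u = x) hux
  · exact absurd (by linarith : u = y) huy
  · exact absurd (congrArg abs (by linarith : x - u = y - v)) hne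
  · exact absurd (by linarith : u = v) huv
end

section
/- (4-cycle rigidity, Observation 2.) Let f, g : {1,2,3,4} → ℝ be injective maps such that |f(1) − f(2)| = |g(1) − g(2)|, |f(2) − f(3)| = |g(2) − g(3)|, |f(3) − f(4)| = |g(3) − g(4)|, and |f(4) − f(1)| = |g(4) − g(1)|. If |f(1) − f(2)| ≠ |f(3) − f(4)|, then there exist ε ∈ {1, −1} and c ∈ ℝ with g(i) = ε·f(i) + c for all i; that is, a 4-cycle point placement graph in which one pair of opposite edges has unequal lengths is line rigid. -/
/-- Observation 2 (4-cycle rigidity): a 4-cycle point placement graph in which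
one pair of opposite edges has unequal lengths is line rigid. Vertices
`1,2,3,4` are modelled as `0,1,2,3 : Fin 4`. -/
theorem four_cycle_rigid
    (f g : Fin 4 → ℝ)
    (hf : Function.Injective f) (hg : Function.Injective g)
    (h12 : |f 0 - f 1| = |g 0 - g 1|)
    (h23 : |f 1 - f 2| = |g 1 - g 2|)
    (h34 : |f 2 - f 3| = |g 2 - g 3|)
    (h41 : |f 3 - f 0| = |g 3 - g 0|)
    (hne : |f 0 - f 1| ≠ |f 2 - f 3|) :
    ∃ ε c : ℝ, (ε = 1 ∨ ε = -1) ∧ ∀ i, g i = ε * f i + c := by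
  rcases abs_eq_abs.mp h12 with ha | ha <;>
  rcases abs_eq_abs.mp h23 with hb | hb <;>
  rcases abs_eq_abs.mp h34 with hc | hc <;>
  rcases abs_eq_abs.mp h41 with hd | hd <;>
  first
    | (refine ⟨1, g 0 - f 0, Or.inl rfl, fun i => ?_⟩
       fin_cases i <;> simp <;> linarith)
    | (refine ⟨-1, g 0 + f 0, Or.inr rfl, fun i => ?_⟩
       fin_cases i <;> simp <;> linarith)
    | exact absurd (hf (show f 0 = f 1 by linarith)) (by decide)
    | exact absurd (hf (show f 1 = f 2 by linarith)) (by decide)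
    | exact absurd (hf (show f 2 = f 3 by linarith)) (by decide)
    | exact absurd (hf (show f 3 = f 0 by linarith)) (by decide)
    | exact absurd (hf (show f 0 = f 2 by linarith)) (by decide)
    | exact absurd (hf (show f 1 = f 3 by linarith)) (by decide)
    | exact (hne (by rw [show f 0 - f 1 = -(f 2 - f 3) by linarith, abs_neg])).elim
end

section
/- (Anchored chain of length 3.) Let u, v ∈ ℝ with u ≠ v, and let x, y, x′, y′ ∈ ℝ be such that u, x, y, v are pairwise distinct and u, x′, y′, v are pairwise distinct. Suppose |x − u| = |x′ − u|, |y − x| = |y′ − x′|, |v − y| = |v − y′|, and |x − u| ≠ |v − y|. Then x = x′ and y = y′. (This is the rigidity of the 4-cycle (p3, q3, r3, s) used in the 3-path component: once p3 and s are fixed on the line, the condition |p3q3| ≠ |r3s| makes q3 and r3 unambiguous.) -/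
/-- Anchored chain of length 3: rigidity of the 4-cycle `(p3, q3, r3, s)` of
the 3-path component. Once `u = p3` and `v = s` are fixed on the line, the
condition `|p3q3| ≠ |r3s|` makes `q3` and `r3` unambiguous. -/
theorem anchored_chain_three_rigid
    (u v x y x' y' : ℝ) (huv : u ≠ v)
    (hdist : u ≠ x ∧ u ≠ y ∧ u ≠ v ∧ x ≠ y ∧ x ≠ v ∧ y ≠ v)
    (hdist' : u ≠ x' ∧ u ≠ y' ∧ u ≠ v ∧ x' ≠ y' ∧ x' ≠ v ∧ y' ≠ v)
    (h1 : |x - u| = |x' - u|)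
    (h2 : |y - x| = |y' - x'|)
    (h3 : |v - y| = |v - y'|)
    (hne : |x - u| ≠ |v - y|) :
    x = x' ∧ y = y' := by
  obtain ⟨a1, a2, a3, a4, a5, a6⟩ := hdist
  obtain ⟨b1, b2, b3, b4, b5, b6⟩ := hdist'
  rcases abs_eq_abs.mp h1 with c1 | c1 <;>
  rcases abs_eq_abs.mp h2 with c2 | c2 <;>
  rcases abs_eq_abs.mp h3 with c3 | c3 <;>
  constructor <;>
  first
    | linarith
    | (exfalso; apply hne; rw [abs_sub_comm v y]; apply congrArg; linarith)
    | (exfalso; apply hne; apply congrArg; linarith)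
    | (exfalso; first
        | (apply a1; linarith) | (apply a2; linarith) | (apply a4; linarith)
        | (apply a5; linarith) | (apply a6; linarith) | (apply huv; linarith)
        | (apply b1; linarith) | (apply b2; linarith) | (apply b4; linarith)
        | (apply b5; linarith) | (apply b6; linarith))
end

section
/- (Line rigidity of K_{2,3}.) Let f, g be injective maps from the five-element vertex set {a1, a2, b1, b2, b3} to ℝ such that |f(a_i) − f(b_j)| = |g(a_i) − g(b_j)| for all i ∈ {1,2} and j ∈ {1,2,3} (i.e., f and g realize the same lengths on all six edges of the complete bipartite graph K_{2,3}). Then there exist ε ∈ {1, −1} and c ∈ ℝ with g(v) = ε·f(v) + c for every vertex v; that is, K_{2,3} is line rigid. -/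
set_option maxHeartbeats 4000000 in
private lemma K23_aux (f0 f1 f2 f3 f4 g0 g1 g2 g3 g4 : ℝ)
    (n01 : f0 ≠ f1) (n02 : f0 ≠ f2) (n03 : f0 ≠ f3) (n04 : f0 ≠ f4)
    (n12 : f1 ≠ f2) (n13 : f1 ≠ f3) (n14 : f1 ≠ f4)
    (n23 : f2 ≠ f3) (n24 : f2 ≠ f4) (n34 : f3 ≠ f4)
    (h12 : f0 - f2 = g0 - g2 ∨ f0 - f2 = -(g0 - g2))
    (h13 : f0 - f3 = g0 - g3 ∨ f0 - f3 = -(g0 - g3))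
    (h14 : f0 - f4 = g0 - g4 ∨ f0 - f4 = -(g0 - g4))
    (h22 : f1 - f2 = g1 - g2 ∨ f1 - f2 = -(g1 - g2))
    (h23 : f1 - f3 = g1 - g3 ∨ f1 - f3 = -(g1 - g3))
    (h24 : f1 - f4 = g1 - g4 ∨ f1 - f4 = -(g1 - g4)) :
    ∃ ε c : ℝ, (ε = 1 ∨ ε = -1) ∧
      g0 = ε * f0 + c ∧ g1 = ε * f1 + c ∧ g2 = ε * f2 + c ∧
      g3 = ε * f3 + c ∧ g4 = ε * f4 + c := by
  rcases h12 with h12 | h12 <;>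
  rcases h13 with h13 | h13 <;>
  rcases h14 with h14 | h14 <;>
  rcases h22 with h22 | h22 <;>
  rcases h23 with h23 | h23 <;>
  rcases h24 with h24 | h24 <;>
  first
  | (refine ⟨1, g0 - f0, Or.inl rfl, ?_, ?_, ?_, ?_, ?_⟩ <;> linarith)
  | (refine ⟨-1, g0 + f0, Or.inr rfl, ?_, ?_, ?_, ?_, ?_⟩ <;> linarith)
  | (exfalso; first
      | exact n01 (by linarith)
      | exact n02 (by linarith)
      | exact n03 (by linarith)
      | exact n04 (by linarith)
      | exact n12 (by linarith)
      | exact n13 (by linarith)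
      | exact n14 (by linarith)
      | exact n23 (by linarith)
      | exact n24 (by linarith)
      | exact n34 (by linarith))

/-- Line rigidity of `K_{2,3}`: any two injective placements of the vertex set
`{a1, a2, b1, b2, b3}` (indexed as `a1 = 0, a2 = 1, b1 = 2, b2 = 3, b3 = 4` in
`Fin 5`) realizing the same lengths on all six edges of `K_{2,3}` are
congruent. -/
theorem K23_line_rigid
    (f g : Fin 5 → ℝ)
    (hf : Function.Injective f) (hg : Function.Injective g)
    (h12 : |f 0 - f 2| = |g 0 - g 2|)
    (h13 : |f 0 - f 3| = |g 0 - g 3|)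
    (h14 : |f 0 - f 4| = |g 0 - g 4|)
    (h22 : |f 1 - f 2| = |g 1 - g 2|)
    (h23 : |f 1 - f 3| = |g 1 - g 3|)
    (h24 : |f 1 - f 4| = |g 1 - g 4|) :
    ∃ ε c : ℝ, (ε = 1 ∨ ε = -1) ∧ ∀ v, g v = ε * f v + c := by
  obtain ⟨ε, c, hε, e0, e1, e2, e3, e4⟩ :=
    K23_aux (f 0) (f 1) (f 2) (f 3) (f 4) (g 0) (g 1) (g 2) (g 3) (g 4)
      (hf.ne (by decide)) (hf.ne (by decide)) (hf.ne (by decide))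
      (hf.ne (by decide)) (hf.ne (by decide)) (hf.ne (by decide))
      (hf.ne (by decide)) (hf.ne (by decide)) (hf.ne (by decide))
      (hf.ne (by decide))
      (abs_eq_abs.mp h12) (abs_eq_abs.mp h13) (abs_eq_abs.mp h14)
      (abs_eq_abs.mp h22) (abs_eq_abs.mp h23) (abs_eq_abs.mp h24)
  exact ⟨ε, c, hε, fun v => by fin_cases v <;> assumption⟩
end
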